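/- arXiv:1812.11395 — 2 statements merged into one kernel-verified Lean document; each statement's English description precedes it below -/
import Mathlib

section
/- Let n ≥ 1, T > 0, and let H : ℝⁿ × ℝⁿ → ℝ be twice continuously differentiable. Suppose φ : [0, T] × (ℝⁿ × ℝⁿ) → ℝⁿ × ℝⁿ is twice continuously differentiable, satisfies φ(0, x) = x for all x, and solves ∂φ/∂t(t, x) = X_H(φ(t, x)) for all (t, x), where X_H is the Hamiltonian vector field of H. Then the phase flow preserves phase volume: for every t ∈ [0, T] and every x, det(D_x φ(t, x)) = 1. (Liouville's phase-volume preservation, obtained in the paper as the n-th exterior power of the invariance of the symplectic two-form.) -/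
/-!
Let `A(t) = D_x φ(t, x)`. Differentiating `∂ₜφ = X_H ∘ φ` in `x` (the mixed partials of the
`C²` map `φ` commute) gives the variational equation `A' = D X_H(φ(t, x)) ∘ A`, and Jacobi's
formula turns it into `(det A)' = tr (D X_H(φ(t, x))) · det A`. The derivative of `X_H` is the
symplectic matrix times the symmetric Hessian of `H`, so its trace vanishes. Hence `det A` is
constant on `[0, T]`, equal to its value `det id = 1` at `t = 0`.
-/

open Finset Set

/-- The Hamiltonian vector field `X_H(q,p) = (∂H/∂p, −∂H/∂q)` of a Hamiltonian
`H : ℝⁿ × ℝⁿ → ℝ`. -/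
noncomputable def hamVF (n : ℕ) (H : (Fin n → ℝ) × (Fin n → ℝ) → ℝ)
    (x : (Fin n → ℝ) × (Fin n → ℝ)) : (Fin n → ℝ) × (Fin n → ℝ) :=
  (fun i => fderiv ℝ H x (0, Pi.single i 1),
   fun i => - fderiv ℝ H x (Pi.single i 1, 0))

namespace Matrix

theorem sum_det_updateRow_mul {R ι : Type*} [CommRing R] [Fintype ι] [DecidableEq ι]
    (N M : Matrix ι ι R) :
    ∑ i, (M.updateRow i ((N * M) i)).det = N.trace * M.det := by
  have hrow : ∀ i, (N * M) i = ∑ k, N i k • M k := fun i => by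
    ext j
    simp [mul_apply, Finset.sum_apply]
  simp only [hrow, det_updateRow_sum, trace, diag, smul_eq_mul, Finset.sum_mul]

variable {𝕜 ι : Type*} [NontriviallyNormedField 𝕜] [Fintype ι] [DecidableEq ι]

noncomputable def detRowContinuousMultilinear :
    ContinuousMultilinearMap 𝕜 (fun _ : ι => ι → 𝕜) 𝕜 where
  toMultilinearMap := (detRowAlternating (R := 𝕜) (n := ι)).toMultilinearMap
  cont := continuous_id.matrix_det

theorem hasDerivAt_det_of_hasDerivAt_eq_mul {M : 𝕜 → ι → ι → 𝕜} {N : Matrix ι ι 𝕜} {t : 𝕜}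
    (h : HasDerivAt M (N * of (M t)) t) :
    HasDerivAt (fun s => (of (M s)).det) (N.trace * (of (M t)).det) t := by
  have hdet := (detRowContinuousMultilinear.hasFDerivAt (M t)).comp_hasDerivAt t h
  rw [ContinuousMultilinearMap.linearDeriv_apply _ (M t) (N * of (M t))] at hdet
  rw [← sum_det_updateRow_mul]
  exact hdet

end Matrix

theorem ContinuousLinearMap.hasDerivAt_det_of_hasDerivAt_eq_comp {𝕜 E : Type*}
    [NontriviallyNormedField 𝕜] [CompleteSpace 𝕜] [NormedAddCommGroup E] [NormedSpace 𝕜 E]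
    [FiniteDimensional 𝕜 E] {A : 𝕜 → E →L[𝕜] E} {B : E →L[𝕜] E} {t : 𝕜}
    (h : HasDerivAt A (B ∘L A t) t) :
    HasDerivAt (fun s => (A s).det) (LinearMap.trace 𝕜 E B * (A t).det) t := by
  let b := Module.finBasis 𝕜 E
  let toMatrixL : (E →L[𝕜] E) →L[𝕜] (Fin _ → Fin _ → 𝕜) :=
    LinearMap.toContinuousLinearMap ((LinearMap.toMatrix b b).toLinearMap ∘ₗ coeLM 𝕜)
  have hM := (toMatrixL.hasFDerivAt (x := A t)).comp_hasDerivAt t h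
  have hcomp : toMatrixL (B ∘L A t) = LinearMap.toMatrix b b B * Matrix.of (toMatrixL (A t)) :=
    LinearMap.toMatrix_comp b b b (B : E →ₗ[𝕜] E) (A t)
  rw [hcomp] at hM
  simp only [LinearMap.trace_eq_matrix_trace 𝕜 b, ← LinearMap.det_toMatrix b]
  exact Matrix.hasDerivAt_det_of_hasDerivAt_eq_mul hM

theorem hasDerivAt_fderiv_flow {𝕜 E : Type*} [RCLike 𝕜] [NormedAddCommGroup E]
    [NormedSpace 𝕜 E] {φ : 𝕜 → E → E} {V : E → E} {t : 𝕜}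
    (hφ : ContDiff 𝕜 2 (fun p : 𝕜 × E => φ p.1 p.2))
    (hflow : ∀ z, HasDerivAt (fun τ => φ τ z) (V (φ t z)) t) (x : E)
    (hV : DifferentiableAt 𝕜 V (φ t x)) :
    HasDerivAt (fun τ => fderiv 𝕜 (φ τ) x) (fderiv 𝕜 V (φ t x) ∘L fderiv 𝕜 (φ t) x) t := by
  set F : 𝕜 × E → E := fun p => φ p.1 p.2
  have hF : Differentiable 𝕜 F := hφ.differentiable (by norm_num)
  have hF' : Differentiable 𝕜 (fderiv 𝕜 F) :=
    (hφ.fderiv_right (m := 1) (by norm_num)).differentiable (by norm_num)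
  set F'' := fderiv 𝕜 (fderiv 𝕜 F) (t, x)
  have hslice τ z : HasFDerivAt (φ τ) (fderiv 𝕜 F (τ, z) ∘L .inr 𝕜 𝕜 E) z :=
    (hF (τ, z)).hasFDerivAt.comp z (hasFDerivAt_prodMk_right τ z)
  have hcurve z : HasDerivAt (fun τ => (τ, z)) ((1, 0) : 𝕜 × E) t :=
    (hasDerivAt_id t).prodMk (hasDerivAt_const t z)
  have hdt z : HasDerivAt (fun τ => φ τ z) (fderiv 𝕜 F (t, z) (1, 0)) t := by
    exact (hF (t, z)).hasFDerivAt.comp_hasDerivAt t (hcurve z)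
  have htime : HasDerivAt (fun τ => fderiv 𝕜 (φ τ) x) (F'' (1, 0) ∘L .inr 𝕜 𝕜 E) t := by
    simp only [fun τ => (hslice τ x).fderiv]
    have := (hF' (t, x)).hasFDerivAt.comp_hasDerivAt t (hcurve x)
    simpa using this.clm_comp (hasDerivAt_const t (ContinuousLinearMap.inr 𝕜 𝕜 E))
  -- `z ↦ ∂ₜF (t, z)` is `V ∘ φ t`, so its derivative, the mixed partial `∂ₓ∂ₜF`, is `DV ∘ Dₓφ`
  have hmixed : F''.flip (1, 0) ∘L .inr 𝕜 𝕜 E = fderiv 𝕜 V (φ t x) ∘L fderiv 𝕜 (φ t) x := by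
    have hpartial : HasFDerivAt (fun z => fderiv 𝕜 F (t, z) (1, 0))
        (F''.flip (1, 0) ∘L .inr 𝕜 𝕜 E) x := by
      have := (hF' (t, x)).hasFDerivAt.clm_apply (hasFDerivAt_const ((1, 0) : 𝕜 × E) (t, x))
      rw [ContinuousLinearMap.comp_zero, zero_add] at this
      exact this.comp x (hasFDerivAt_prodMk_right t x)
    rw [show (fun z => fderiv 𝕜 F (t, z) (1, 0)) = fun z => V (φ t z) from
      funext fun z => (hdt z).unique (hflow z)] at hpartial
    exact hpartial.unique (hV.hasFDerivAt.comp x (hslice t x).differentiableAt.hasFDerivAt)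
  have hsymm : IsSymmSndFDerivAt 𝕜 F (t, x) := hφ.contDiffAt.isSymmSndFDerivAt (by simp)
  convert htime using 1
  rw [← hmixed]
  ext v
  simpa using hsymm.eq (0, v) (1, 0)

theorem LinearMap.trace_prod_pi_eq_sum {R ι : Type*} [CommRing R] [Fintype ι] [DecidableEq ι]
    (f : (ι → R) × (ι → R) →ₗ[R] (ι → R) × (ι → R)) :
    LinearMap.trace R _ f = ∑ i, (f (Pi.single i 1, 0)).1 i + ∑ i, (f (0, Pi.single i 1)).2 i := by
  let b := (Pi.basisFun R ι).prod (Pi.basisFun R ι)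
  rw [LinearMap.trace_eq_matrix_trace R b, Matrix.trace, Fintype.sum_sum_type]
  simp [b, LinearMap.toMatrix_apply, Module.Basis.prod_apply]

section Hamiltonian

abbrev PhaseSpace (n : ℕ) := (Fin n → ℝ) × (Fin n → ℝ)

variable {n : ℕ}

/-- The map `dH ↦ X_H` induced by the standard symplectic form. -/
noncomputable def symplecticSharp (n : ℕ) : (PhaseSpace n →L[ℝ] ℝ) →L[ℝ] PhaseSpace n :=
  (ContinuousLinearMap.pi fun i => .apply ℝ ℝ (0, Pi.single i 1)).prod
    (-ContinuousLinearMap.pi fun i => .apply ℝ ℝ (Pi.single i 1, 0))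

theorem hamVF_eq_symplecticSharp_fderiv (H : PhaseSpace n → ℝ) :
    hamVF n H = fun x => symplecticSharp n (fderiv ℝ H x) := rfl

theorem trace_symplecticSharp_comp (S : PhaseSpace n →L[ℝ] PhaseSpace n →L[ℝ] ℝ)
    (hS : ∀ v w, S v w = S w v) :
    LinearMap.trace ℝ _ (symplecticSharp n ∘L S).toLinearMap = 0 := by
  rw [LinearMap.trace_prod_pi_eq_sum]
  simp [symplecticSharp, hS (Pi.single _ 1, 0)]

theorem hasFDerivAt_hamVF {H : PhaseSpace n → ℝ} (hH : ContDiff ℝ 2 H) (y : PhaseSpace n) :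
    HasFDerivAt (hamVF n H) (symplecticSharp n ∘L fderiv ℝ (fderiv ℝ H) y) y := by
  rw [hamVF_eq_symplecticSharp_fderiv]
  exact (symplecticSharp n).hasFDerivAt.comp y
    (((hH.fderiv_right (m := 1) (by norm_num)).differentiable (by norm_num)) y).hasFDerivAt

theorem trace_fderiv_hamVF {H : PhaseSpace n → ℝ} (hH : ContDiff ℝ 2 H) (y : PhaseSpace n) :
    LinearMap.trace ℝ _ (fderiv ℝ (hamVF n H) y).toLinearMap = 0 := by
  rw [(hasFDerivAt_hamVF hH y).fderiv]
  exact trace_symplecticSharp_comp _ (hH.contDiffAt.isSymmSndFDerivAt (by simp)).eq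

end Hamiltonian

theorem hamiltonian_flow_preserves_volume_general (n : ℕ) (T : ℝ)
    (H : (Fin n → ℝ) × (Fin n → ℝ) → ℝ) (hH : ContDiff ℝ 2 H)
    (φ : ℝ → (Fin n → ℝ) × (Fin n → ℝ) → (Fin n → ℝ) × (Fin n → ℝ))
    (hφ : ContDiff ℝ 2 (fun p : ℝ × ((Fin n → ℝ) × (Fin n → ℝ)) => φ p.1 p.2))
    (hφ0 : ∀ x, φ 0 x = x)
    (hflow : ∀ t ∈ Icc (0:ℝ) T, ∀ x,
      HasDerivAt (fun τ => φ τ x) (hamVF n H (φ t x)) t) :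
    ∀ t ∈ Icc (0:ℝ) T, ∀ x,
      LinearMap.det ((fderiv ℝ (φ t) x : (Fin n → ℝ) × (Fin n → ℝ) →L[ℝ]
        (Fin n → ℝ) × (Fin n → ℝ)) : (Fin n → ℝ) × (Fin n → ℝ) →ₗ[ℝ]
        (Fin n → ℝ) × (Fin n → ℝ)) = 1 := by
  intro t ht x
  have hdet : ∀ s ∈ Icc 0 T, HasDerivAt (fun τ => (fderiv ℝ (φ τ) x).det) 0 s := by
    intro s hs
    have := ContinuousLinearMap.hasDerivAt_det_of_hasDerivAt_eq_comp <|
      hasDerivAt_fderiv_flow hφ (hflow s hs) x (hasFDerivAt_hamVF hH _).differentiableAt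
    rwa [trace_fderiv_hamVF hH, zero_mul] at this
  have hconst : (fderiv ℝ (φ t) x).det = (fderiv ℝ (φ 0) x).det :=
    constant_of_has_deriv_right_zero (fun s hs => (hdet s hs).continuousAt.continuousWithinAt)
      (fun s hs => (hdet s (Ico_subset_Icc_self hs)).hasDerivWithinAt) t ht
  have hinit : fderiv ℝ (φ 0) x = ContinuousLinearMap.id ℝ _ := by
    rw [show φ 0 = id from funext hφ0, fderiv_id]
  show (fderiv ℝ (φ t) x).det = 1
  rw [hconst, hinit]
  exact LinearMap.det_id

/-- Liouville's theorem: the phase flow of a Hamiltonian system preserves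
phase volume, i.e. the determinant of the spatial derivative of the flow is `1`. -/
theorem hamiltonian_flow_preserves_volume (n : ℕ) (hn : 1 ≤ n) (T : ℝ) (hT : 0 < T)
    (H : (Fin n → ℝ) × (Fin n → ℝ) → ℝ) (hH : ContDiff ℝ 2 H)
    (φ : ℝ → (Fin n → ℝ) × (Fin n → ℝ) → (Fin n → ℝ) × (Fin n → ℝ))
    (hφ : ContDiff ℝ 2 (fun p : ℝ × ((Fin n → ℝ) × (Fin n → ℝ)) => φ p.1 p.2))
    (hφ0 : ∀ x, φ 0 x = x)
    (hflow : ∀ t ∈ Icc (0:ℝ) T, ∀ x,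
      HasDerivAt (fun τ => φ τ x) (hamVF n H (φ t x)) t) :
    ∀ t ∈ Icc (0:ℝ) T, ∀ x,
      LinearMap.det ((fderiv ℝ (φ t) x : (Fin n → ℝ) × (Fin n → ℝ) →L[ℝ]
        (Fin n → ℝ) × (Fin n → ℝ)) : (Fin n → ℝ) × (Fin n → ℝ) →ₗ[ℝ]
        (Fin n → ℝ) × (Fin n → ℝ)) = 1 :=
  hamiltonian_flow_preserves_volume_general n T H hH φ hφ hφ0 hflow
end

section
/- Let (W_t)_{t≥0} be a standard one-dimensional Brownian motion, let a ∈ ℝ, and let 0 ≤ s ≤ r. Then E[cos²(a W_s) · cos²(a W_r)] = (1/8) ( e^{−2 a² r − 6 a² s} + e^{−2 a² (r − s)} + 2 e^{−2 a² s} + 2 e^{−2 a² r} + 2 ). (This two-time expectation, computed in the paper's appendix using the stationary independent increments of the driving processes and their characteristic functions, is the key step in the second-moment computation for the ergodic average of cos² along the unperturbed flow.) -/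
open MeasureTheory ProbabilityTheory Real Filter

/-- A standard one-dimensional Brownian motion: starts at `0` a.s., jointly
measurable with a.s. continuous sample paths, has independent increments, and
its increments over `[s,t]` (for `0 ≤ s ≤ t`) are Gaussian `N(0, t − s)`. -/
structure IsStandardBrownian {Ω : Type*} [MeasureSpace Ω] (W : ℝ → Ω → ℝ) : Prop where
  start_zero : ∀ᵐ ω ∂(ℙ : Measure Ω), W 0 ω = 0
  jointly_measurable : Measurable (fun p : ℝ × Ω => W p.1 p.2)
  cont_paths : ∀ᵐ ω ∂(ℙ : Measure Ω), Continuous fun t => W t ω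
  indep_incr : ∀ (k : ℕ) (t : Fin (k + 1) → ℝ), (∀ i, 0 ≤ t i) → Monotone t →
    iIndepFun
      (fun (i : Fin k) ω => W (t i.succ) ω - W (t i.castSucc) ω) (ℙ : Measure Ω)
  gaussian_incr : ∀ s t : ℝ, 0 ≤ s → s ≤ t →
    Measure.map (fun ω => W t ω - W s ω) (ℙ : Measure Ω)
      = gaussianReal 0 (t - s).toNNReal


/-!
Product-to-sum formulas write `cos²(a W_s) cos²(a W_r)` as a combination of `1` and
`cos (α W_s + β W_r)` for four pairs `(α, β)`. Since
`α W_s + β W_r = (α + β) W_s + β (W_r - W_s)` is a sum of independent centred Gaussians, it is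
`N(0, (α + β)² s + β² (r - s))`, and `E[cos Z] = exp (-Var Z / 2)` for a centred Gaussian `Z`
is the real part of its characteristic function at `1`.
-/

open scoped NNReal

lemma integral_cos_mul_gaussianReal (t μ : ℝ) (v : ℝ≥0) :
    ∫ x, cos (t * x) ∂gaussianReal μ v = cos (t * μ) * exp (-(v * t ^ 2 / 2)) := by
  have h := congrArg Complex.re (charFun_gaussianReal (μ := μ) (v := v) t)
  have hint : Integrable (fun x : ℝ => Complex.exp (t * x * Complex.I)) (gaussianReal μ v) :=
    Integrable.of_bound (by fun_prop) 1 (ae_of_all _ fun x => by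
      rw [← Complex.ofReal_mul, Complex.norm_exp_ofReal_mul_I])
  rw [charFun_apply_real, ← RCLike.re_to_complex, ← integral_re hint] at h
  simpa [Complex.exp_re, mul_comm, ← Complex.ofReal_pow] using h

lemma cos_sq_mul_cos_sq (x y : ℝ) :
    cos x ^ 2 * cos y ^ 2
      = (2 + 2 * cos (2 * x) + 2 * cos (2 * y) + cos (2 * x + 2 * y) + cos (-2 * x + 2 * y)) / 8 := by
  rw [cos_sq x, cos_sq y, cos_add, cos_add, neg_mul, cos_neg, sin_neg]
  ring

namespace IsStandardBrownian

variable {Ω : Type*} [MeasureSpace Ω] {W : ℝ → Ω → ℝ} {s r : ℝ}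

lemma measurable (hW : IsStandardBrownian W) (t : ℝ) : Measurable (W t) :=
  hW.jointly_measurable.comp (measurable_const.prodMk measurable_id)

lemma hasLaw_sub (hW : IsStandardBrownian W) (hs : 0 ≤ s) (hsr : s ≤ r) :
    HasLaw (fun ω => W r ω - W s ω) (gaussianReal 0 (r - s).toNNReal) ℙ where
  aemeasurable := ((hW.measurable r).sub (hW.measurable s)).aemeasurable
  map_eq := hW.gaussian_incr s r hs hsr

lemma hasLaw (hW : IsStandardBrownian W) (hr : 0 ≤ r) :
    HasLaw (W r) (gaussianReal 0 r.toNNReal) ℙ := by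
  have h := hW.hasLaw_sub le_rfl hr
  rw [sub_zero] at h
  exact h.congr (by filter_upwards [hW.start_zero] with ω h0 using by simp [h0])

lemma indepFun_sub (hW : IsStandardBrownian W) (hs : 0 ≤ s) (hsr : s ≤ r) :
    IndepFun (W s) (fun ω => W r ω - W s ω) ℙ := by
  have hnonneg : ∀ i, 0 ≤ ![0, s, r] i := fun i => by fin_cases i <;> simp [hs, hs.trans hsr]
  have hmono : Monotone ![0, s, r] := Fin.monotone_iff_le_succ.2 fun i => by
    fin_cases i <;> simp [hs, hsr]
  have h := (hW.indep_incr 2 ![0, s, r] hnonneg hmono).indepFun (i := 0) (j := 1) (by decide)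
  refine h.congr ?_ (ae_of_all _ fun _ => rfl)
  filter_upwards [hW.start_zero] with ω h0 using by simp [h0]

lemma hasLaw_mul_add_mul (hW : IsStandardBrownian W) (hs : 0 ≤ s) (hsr : s ≤ r) (α β : ℝ) :
    HasLaw (fun ω => α * W s ω + β * W r ω)
      (gaussianReal 0 ((α + β) ^ 2 * s + β ^ 2 * (r - s)).toNNReal) ℙ := by
  have h := (hW.indepFun_sub hs hsr).comp (measurable_const_mul (α + β)) (measurable_const_mul β)
    |>.hasLaw_fun_add (gaussianReal_const_mul (hW.hasLaw hs) _)
      (gaussianReal_const_mul (hW.hasLaw_sub hs hsr) β)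
  rw [gaussianReal_conv_gaussianReal] at h
  have hv : 0 ≤ (α + β) ^ 2 * s + β ^ 2 * (r - s) := by
    have := sub_nonneg.2 hsr
    positivity
  convert h using 2
  · ring
  · simp
  · ext
    simp [hs, hsr, hv]

lemma integral_cos_mul_add_mul (hW : IsStandardBrownian W) (hs : 0 ≤ s) (hsr : s ≤ r) (α β : ℝ) :
    ∫ ω, cos (α * W s ω + β * W r ω) ∂ℙ = exp (-(((α + β) ^ 2 * s + β ^ 2 * (r - s)) / 2)) := by
  have h := (hW.hasLaw_mul_add_mul hs hsr α β).integral_comp (f := fun x => cos (1 * x))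
    (by fun_prop)
  rw [integral_cos_mul_gaussianReal] at h
  have hv : 0 ≤ (α + β) ^ 2 * s + β ^ 2 * (r - s) := by
    have := sub_nonneg.2 hsr
    positivity
  simpa [Function.comp_def, Real.coe_toNNReal _ hv] using h

lemma integrable_cos_mul_add_mul [IsFiniteMeasure (ℙ : Measure Ω)] (hW : IsStandardBrownian W)
    (α β : ℝ) : Integrable (fun ω => cos (α * W s ω + β * W r ω)) ℙ := by
  have := hW.measurable s
  have := hW.measurable r
  exact Integrable.of_bound (by fun_prop) 1 (ae_of_all _ fun ω => abs_cos_le_one _)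

end IsStandardBrownian

/-- The two-time expectation of `cos²(a W_s) cos²(a W_r)` for `0 ≤ s ≤ r`:
`E[cos²(aW_s) cos²(aW_r)]
  = (1/8)(e^{−2a²r−6a²s} + e^{−2a²(r−s)} + 2e^{−2a²s} + 2e^{−2a²r} + 2)`. -/
theorem brownian_two_time_cos_sq_expectation {Ω : Type*} [MeasureSpace Ω]
    [IsProbabilityMeasure (ℙ : Measure Ω)]
    (W : ℝ → Ω → ℝ) (hW : IsStandardBrownian W) (a : ℝ)
    (s r : ℝ) (hs : 0 ≤ s) (hsr : s ≤ r) :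
    ∫ ω, (Real.cos (a * W s ω)) ^ 2 * (Real.cos (a * W r ω)) ^ 2 ∂ℙ
      = (1 / 8) * (Real.exp (-2 * a ^ 2 * r - 6 * a ^ 2 * s)
          + Real.exp (-2 * a ^ 2 * (r - s))
          + 2 * Real.exp (-2 * a ^ 2 * s)
          + 2 * Real.exp (-2 * a ^ 2 * r) + 2) := by
  set g : ℝ → ℝ → Ω → ℝ := fun α β ω => cos (α * W s ω + β * W r ω)
  have hg : ∀ α β, Integrable (g α β) ℙ := hW.integrable_cos_mul_add_mul
  have hexpand : (fun ω => cos (a * W s ω) ^ 2 * cos (a * W r ω) ^ 2) = fun ω =>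
      (2 + 2 * g (2 * a) 0 ω + 2 * g 0 (2 * a) ω + g (2 * a) (2 * a) ω
        + g (-2 * a) (2 * a) ω) / 8 := by
    funext ω
    rw [cos_sq_mul_cos_sq]
    simp only [g]
    ring_nf
  rw [hexpand, integral_div, integral_add, integral_add, integral_add, integral_add]
  · simp only [integral_const, integral_const_mul, g, hW.integral_cos_mul_add_mul hs hsr,
      probReal_univ, smul_eq_mul]
    ring_nf
  all_goals fun_prop
end
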